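/- arXiv:0908.4171 — 3 statements merged into one kernel-verified Lean document; each statement's English description precedes it below -/
import Mathlib

section
/- Let A(0) and A(1) be the 3×3 matrices with rows (1,0,0),(0,1,0),(1,1,0) and (1,0,1),(0,1,1),(0,0,1) respectively, and let U := (1,1,1)^T. Then for every y ∈ {0,1}^ℕ and n ≥ 1 the vector A(y_1)⋯A(y_n)U is nonzero, and the continuous maps Π_n(·,U) : {0,1}^ℕ → S_3, Π_n(y,U) := A(y_1)⋯A(y_n)U/‖A(y_1)⋯A(y_n)U‖, converge uniformly on {0,1}^ℕ to a limit map V : {0,1}^ℕ → S_3 as n → +∞. -/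
/-!
`A(0)` sends the ray through `(1, 1, s)` to the ray through `(1, 1, 2)`, and `A(1)` sends it
to the ray through `(1, 1, s / (1 + s))`. Hence `A(y_1)⋯A(y_n) U` is a positive multiple of
`(1, 1, t_n(y))` with `t_n(y) = f_{y_1} ∘ ⋯ ∘ f_{y_n} (1) ∈ [0, 2]`, where `f_0 ≡ 2` and
`f_1 s = s / (1 + s)`. An `n`-fold composition of the `f_i` is constant unless all letters
are `1`, and `f_1^[n] s = s / (1 + n s)`; either way it maps `[0, 2]` into an interval of
length `2 / (2n + 1)`. For `m ≥ n`, `t_m(y)` is the composition of the first `n` letters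
applied to a point of `[0, 2]`, so `|t_m(y) - t_n(y)| ≤ 2 / (2n + 1)` uniformly in `y`. The
same bound holds for `Π_n(y, U) = (1, 1, t_n(y)) / (2 + t_n(y))`, since `t ↦ (1, 1, t) / (2 + t)`
is `1`-Lipschitz on `[0, ∞)` for the sup distance.
-/

open Matrix Filter Finset Topology MeasureTheory

/-- ℓ¹-norm (sum of absolute values of the entries) of a vector. -/
noncomputable def l1 {d : ℕ} (v : Fin d → ℝ) : ℝ := ∑ i, |v i|

/-- Normalization of a vector by its ℓ¹-norm. -/
noncomputable def nrm {d : ℕ} (v : Fin d → ℝ) : Fin d → ℝ := (l1 v)⁻¹ • v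

/-- Probability vector: nonnegative entries summing to `1`. -/
def probVec {d : ℕ} (X : Fin d → ℝ) : Prop := (∀ i, 0 ≤ X i) ∧ ∑ i, X i = 1

/-- `A(ω_1 ⋯ ω_n) = A(ω_1) * ⋯ * A(ω_n)`. -/
noncomputable def wordProd {d a : ℕ} (A : Fin (a + 1) → Matrix (Fin d) (Fin d) ℝ)
    (ω : ℕ → Fin (a + 1)) (n : ℕ) : Matrix (Fin d) (Fin d) ℝ :=
  ((List.range n).map fun k => A (ω k)).prod

/-- `Ω_R` : the set of sequences `ω` such that `A(ω_1⋯ω_n) R ≠ 0` for every `n ≥ 1`. -/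
def OmegaR {d a : ℕ} (A : Fin (a + 1) → Matrix (Fin d) (Fin d) ℝ) (R : Fin d → ℝ) :
    Set (ℕ → Fin (a + 1)) :=
  {ω | ∀ n, 1 ≤ n → wordProd A ω n *ᵥ R ≠ 0}

/-- The two 3×3 matrices of the Kamae measure: `A(0)` and `A(1)`. -/
noncomputable def kamaeA : Fin 2 → Matrix (Fin 3) (Fin 3) ℝ :=
  ![!![1, 0, 0; 0, 1, 0; 1, 1, 0], !![1, 0, 1; 0, 1, 1; 0, 0, 1]]

section UniformLimit

variable {α β : Type*} [PseudoMetricSpace β]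

theorem uniformCauchySeqOn_of_dist_le {F : ℕ → α → β} {b : ℕ → ℝ}
    (hb : Tendsto b atTop (𝓝 0)) (hF : ∀ x n m, n ≤ m → dist (F m x) (F n x) ≤ b n) :
    UniformCauchySeqOn F atTop Set.univ := by
  rw [Metric.uniformCauchySeqOn_iff]
  intro ε hε
  obtain ⟨N, hN⟩ := (Metric.tendsto_atTop.mp hb) (ε / 2) (half_pos hε)
  have hbN : b N < ε / 2 := (abs_lt.mp (by simpa using hN N le_rfl)).2
  refine ⟨N, fun m hm n hn x _ => ?_⟩
  calc dist (F m x) (F n x) ≤ dist (F m x) (F N x) + dist (F n x) (F N x) :=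
        dist_triangle_right _ _ _
    _ ≤ b N + b N := add_le_add (hF x N m hm) (hF x N n hn)
    _ < ε := by linarith

theorem exists_tendstoUniformly_of_dist_le [CompleteSpace β] {F : ℕ → α → β} {b : ℕ → ℝ}
    (hb : Tendsto b atTop (𝓝 0)) (hF : ∀ x n m, n ≤ m → dist (F m x) (F n x) ≤ b n) :
    ∃ V : α → β, TendstoUniformly F V atTop := by
  have hU := uniformCauchySeqOn_of_dist_le hb hF
  choose V hV using fun x => cauchySeq_tendsto_of_complete (hU.cauchySeq (Set.mem_univ x))
  exact ⟨V, tendstoUniformlyOn_univ.mp (hU.tendstoUniformlyOn_of_tendsto fun x _ => hV x)⟩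

end UniformLimit

section Normalization

variable {d : ℕ}

theorem isClosed_setOf_probVec : IsClosed {X : Fin d → ℝ | probVec X} := by
  simp only [probVec, Set.ofPred_and, Set.ofPred_forall]
  exact (isClosed_iInter fun i => isClosed_le continuous_const (continuous_apply i)).inter
    (isClosed_eq (continuous_finsetSum _ fun i _ => continuous_apply i) continuous_const)

theorem l1_smul (c : ℝ) (v : Fin d → ℝ) : l1 (c • v) = |c| * l1 v := by
  simp only [l1, Pi.smul_apply, smul_eq_mul, abs_mul, Finset.mul_sum]

theorem nrm_smul_of_pos {c : ℝ} (hc : 0 < c) (v : Fin d → ℝ) : nrm (c • v) = nrm v := by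
  rw [nrm, nrm, l1_smul, abs_of_pos hc, smul_smul]
  congr 1
  field_simp

theorem probVec_nrm {v : Fin d → ℝ} (hv : ∀ i, 0 ≤ v i) (hv0 : v ≠ 0) : probVec (nrm v) := by
  have hl : l1 v = ∑ i, v i := Finset.sum_congr rfl fun i _ => abs_of_nonneg (hv i)
  have hpos : 0 < l1 v := by
    obtain ⟨i, hi⟩ := Function.ne_iff.mp hv0
    rw [hl]
    exact ((hv i).lt_of_ne' hi).trans_le (Finset.single_le_sum (fun j _ => hv j) (mem_univ i))
  refine ⟨fun i => mul_nonneg (inv_nonneg.mpr hpos.le) (hv i), ?_⟩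
  simp only [nrm, Pi.smul_apply, smul_eq_mul, ← Finset.mul_sum, ← hl, inv_mul_cancel₀ hpos.ne']

end Normalization

theorem wordProd_succ {d a : ℕ} (A : Fin (a + 1) → Matrix (Fin d) (Fin d) ℝ)
    (ω : ℕ → Fin (a + 1)) (n : ℕ) : wordProd A ω (n + 1) = wordProd A ω n * A (ω n) := by
  simp [wordProd, List.range_succ]

def kamaeRay (s : ℝ) : Fin 3 → ℝ := ![1, 1, s]

noncomputable def kamaeRatio : Fin 2 → ℝ → ℝ
  | 0, _ => 2
  | 1, s => s / (1 + s)

noncomputable def kamaeRatioIter (y : ℕ → Fin 2) : ℕ → ℝ → ℝ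
  | 0, s => s
  | n + 1, s => kamaeRatioIter y n (kamaeRatio (y n) s)

theorem kamaeA_mulVec_kamaeRay (i : Fin 2) {s : ℝ} (hs : 0 ≤ s) :
    ∃ c : ℝ, 0 < c ∧ kamaeA i *ᵥ kamaeRay s = c • kamaeRay (kamaeRatio i s) := by
  fin_cases i
  · refine ⟨1, one_pos, ?_⟩
    ext j
    fin_cases j <;> simp [kamaeA, kamaeRay, kamaeRatio, mulVec, dotProduct, Fin.sum_univ_three]
    norm_num
  · refine ⟨1 + s, by positivity, ?_⟩
    ext j
    fin_cases j <;> simp [kamaeA, kamaeRay, kamaeRatio, mulVec, dotProduct, Fin.sum_univ_three]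
    field_simp

theorem kamaeRatio_mapsTo (i : Fin 2) :
    Set.MapsTo (kamaeRatio i) (Set.Icc 0 2) (Set.Icc 0 2) := by
  intro s ⟨hs0, hs2⟩
  fin_cases i
  · simp [kamaeRatio]
  · have h : s / (1 + s) ≤ s := div_le_self hs0 (by linarith)
    exact ⟨by simp only [kamaeRatio]; positivity, by simp only [kamaeRatio]; linarith⟩

theorem kamaeRatioIter_mapsTo (y : ℕ → Fin 2) (n : ℕ) :
    Set.MapsTo (kamaeRatioIter y n) (Set.Icc 0 2) (Set.Icc 0 2) := by
  induction n with
  | zero => exact Set.mapsTo_id _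
  | succ n ih => exact ih.comp (kamaeRatio_mapsTo (y n))

theorem kamaeRatioIter_one_nonneg (y : ℕ → Fin 2) (n : ℕ) : 0 ≤ kamaeRatioIter y n 1 :=
  (kamaeRatioIter_mapsTo y n (by norm_num : (1 : ℝ) ∈ Set.Icc 0 2)).1

theorem wordProd_mulVec_kamaeRay (y : ℕ → Fin 2) (n : ℕ) {s : ℝ} (hs : s ∈ Set.Icc 0 2) :
    ∃ c : ℝ, 0 < c ∧ wordProd kamaeA y n *ᵥ kamaeRay s = c • kamaeRay (kamaeRatioIter y n s) := by
  induction n generalizing s with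
  | zero => exact ⟨1, one_pos, by simp [wordProd, kamaeRatioIter]⟩
  | succ n ih =>
    obtain ⟨c, hc, hA⟩ := kamaeA_mulVec_kamaeRay (y n) hs.1
    obtain ⟨c', hc', hW⟩ := ih (kamaeRatio_mapsTo (y n) hs)
    refine ⟨c * c', mul_pos hc hc', ?_⟩
    rw [wordProd_succ, ← mulVec_mulVec, hA, mulVec_smul, hW, smul_smul, kamaeRatioIter]

theorem kamaeRatioIter_add (y : ℕ → Fin 2) (n k : ℕ) (s : ℝ) :
    kamaeRatioIter y (n + k) s = kamaeRatioIter y n (kamaeRatioIter (fun j => y (n + j)) k s) := by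
  induction k generalizing s with
  | zero => rfl
  | succ k ih => exact ih _

theorem kamaeRatioIter_eq_of_exists_zero {y : ℕ → Fin 2} {n : ℕ} (h : ∃ k < n, y k = 0)
    (s s' : ℝ) : kamaeRatioIter y n s = kamaeRatioIter y n s' := by
  induction n generalizing s s' with
  | zero => obtain ⟨k, hk, -⟩ := h; omega
  | succ n ih =>
    simp only [kamaeRatioIter]
    by_cases hn : y n = 0
    · simp [hn, kamaeRatio]
    · obtain ⟨k, hk, hyk⟩ := h
      exact ih ⟨k, by grind, hyk⟩ _ _

theorem kamaeRatioIter_of_forall_one {y : ℕ → Fin 2} {n : ℕ} (h : ∀ k < n, y k = 1) {s : ℝ}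
    (hs : 0 ≤ s) : kamaeRatioIter y n s = s / (1 + n * s) := by
  induction n generalizing s with
  | zero => simp [kamaeRatioIter]
  | succ n ih =>
    rw [kamaeRatioIter, h n (by omega), kamaeRatio,
      ih (fun k hk => h k (by omega)) (by positivity)]
    push_cast
    field_simp
    ring

theorem abs_kamaeRatioIter_sub_le (y : ℕ → Fin 2) (n : ℕ) {s s' : ℝ} (hs : s ∈ Set.Icc 0 2)
    (hs' : s' ∈ Set.Icc 0 2) :
    |kamaeRatioIter y n s - kamaeRatioIter y n s'| ≤ 2 / (2 * n + 1) := by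
  by_cases h : ∃ k < n, y k = 0
  · rw [kamaeRatioIter_eq_of_exists_zero h s s', sub_self, abs_zero]
    positivity
  · have hone : ∀ k < n, y k = 1 := fun k hk => by grind
    have hrange : ∀ t ∈ Set.Icc (0 : ℝ) 2, t / (1 + n * t) ∈ Set.Icc 0 (2 / (2 * (n : ℝ) + 1)) := by
      intro t ⟨ht0, ht2⟩
      refine ⟨by positivity, ?_⟩
      rw [div_le_div_iff₀ (by positivity) (by positivity)]
      nlinarith [Nat.cast_nonneg (α := ℝ) n]
    rw [kamaeRatioIter_of_forall_one hone hs.1, kamaeRatioIter_of_forall_one hone hs'.1]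
    exact abs_sub_le_of_nonneg_of_le (hrange s hs).1 (hrange s hs).2 (hrange s' hs').1
      (hrange s' hs').2

theorem dist_kamaeRatioIter_le (y : ℕ → Fin 2) {n m : ℕ} (hnm : n ≤ m) :
    dist (kamaeRatioIter y m 1) (kamaeRatioIter y n 1) ≤ 2 / (2 * n + 1) := by
  have h1 : (1 : ℝ) ∈ Set.Icc 0 2 := by norm_num
  obtain ⟨k, rfl⟩ := Nat.exists_eq_add_of_le hnm
  rw [Real.dist_eq, kamaeRatioIter_add]
  exact abs_kamaeRatioIter_sub_le y n (kamaeRatioIter_mapsTo _ k h1) h1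

theorem nrm_kamaeRay {t : ℝ} (ht : 0 ≤ t) : nrm (kamaeRay t) = (2 + t)⁻¹ • kamaeRay t := by
  rw [nrm, l1, Fin.sum_univ_three]
  simp [kamaeRay, abs_of_nonneg ht, one_add_one_eq_two]

theorem dist_nrm_kamaeRay_le {t t' : ℝ} (ht : 0 ≤ t) (ht' : 0 ≤ t') :
    dist (nrm (kamaeRay t)) (nrm (kamaeRay t')) ≤ dist t t' := by
  have hpos : 0 < (2 + t) * (2 + t') := by positivity
  have hmass : |(2 + t)⁻¹ - (2 + t')⁻¹| ≤ |t - t'| := by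
    rw [show (2 + t)⁻¹ - (2 + t')⁻¹ = (t' - t) / ((2 + t) * (2 + t')) by field_simp; ring,
      abs_div, abs_of_pos hpos, abs_sub_comm]
    exact div_le_self (abs_nonneg _) (by nlinarith)
  have hlast : |(2 + t)⁻¹ * t - (2 + t')⁻¹ * t'| ≤ |t - t'| := by
    rw [show (2 + t)⁻¹ * t - (2 + t')⁻¹ * t' = 2 * (t - t') / ((2 + t) * (2 + t')) by
        field_simp; ring, abs_div, abs_mul, abs_two, abs_of_pos hpos, div_le_iff₀ hpos]
    nlinarith [abs_nonneg (t - t'), mul_nonneg ht ht']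
  rw [nrm_kamaeRay ht, nrm_kamaeRay ht', dist_pi_le_iff dist_nonneg]
  intro j
  fin_cases j <;> simpa [kamaeRay, Real.dist_eq]

theorem probVec_nrm_kamaeRay {t : ℝ} (ht : 0 ≤ t) : probVec (nrm (kamaeRay t)) :=
  probVec_nrm (fun j => by fin_cases j <;> simp [kamaeRay, ht])
    (Function.ne_iff.mpr ⟨0, by simp [kamaeRay]⟩)

theorem wordProd_mulVec_one (y : ℕ → Fin 2) (n : ℕ) :
    ∃ c : ℝ, 0 < c ∧ wordProd kamaeA y n *ᵥ (fun _ => 1) = c • kamaeRay (kamaeRatioIter y n 1) := by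
  have hU : (fun _ : Fin 3 => (1 : ℝ)) = kamaeRay 1 := by
    ext j
    fin_cases j <;> rfl
  rw [hU]
  exact wordProd_mulVec_kamaeRay y n (by norm_num)

theorem nrm_wordProd_mulVec_one (y : ℕ → Fin 2) (n : ℕ) :
    nrm (wordProd kamaeA y n *ᵥ fun _ => 1) = nrm (kamaeRay (kamaeRatioIter y n 1)) := by
  obtain ⟨c, hc, h⟩ := wordProd_mulVec_one y n
  rw [h, nrm_smul_of_pos hc]

theorem wordProd_mulVec_one_ne_zero (y : ℕ → Fin 2) (n : ℕ) :
    wordProd kamaeA y n *ᵥ (fun _ => (1 : ℝ)) ≠ 0 := by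
  obtain ⟨c, hc, h⟩ := wordProd_mulVec_one y n
  rw [h]
  exact smul_ne_zero hc.ne' (Function.ne_iff.mpr ⟨0, by simp [kamaeRay]⟩)

theorem probVec_nrm_wordProd_mulVec_one (y : ℕ → Fin 2) (n : ℕ) :
    probVec (nrm (wordProd kamaeA y n *ᵥ fun _ => 1)) := by
  rw [nrm_wordProd_mulVec_one]
  exact probVec_nrm_kamaeRay (kamaeRatioIter_one_nonneg y n)

theorem dist_nrm_wordProd_mulVec_one_le (y : ℕ → Fin 2) {n m : ℕ} (hnm : n ≤ m) :
    dist (nrm (wordProd kamaeA y m *ᵥ fun _ => 1)) (nrm (wordProd kamaeA y n *ᵥ fun _ => 1)) ≤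
      2 / (2 * n + 1) := by
  rw [nrm_wordProd_mulVec_one, nrm_wordProd_mulVec_one]
  exact (dist_nrm_kamaeRay_le (kamaeRatioIter_one_nonneg y m)
    (kamaeRatioIter_one_nonneg y n)).trans (dist_kamaeRatioIter_le y hnm)

theorem tendsto_two_div_two_mul_add_one :
    Tendsto (fun n : ℕ => 2 / (2 * (n : ℝ) + 1)) atTop (𝓝 0) :=
  tendsto_const_nhds.div_atTop <| tendsto_atTop_add_const_right _ 1 <|
    tendsto_natCast_atTop_atTop.const_mul_atTop two_pos

/-- **Proposition 7.1.** For every binary sequence `y` and `n ≥ 1` the vector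
`A(y_1)⋯A(y_n)·U` (with `U = (1,1,1)ᵀ`) is nonzero, and the normalized vectors
`Π_n(y,U)` converge uniformly on `{0,1}^ℕ` to a limit map with values in `S_3`. -/
theorem kamae_uniform_convergence :
    (∀ (y : ℕ → Fin 2) (n : ℕ), 1 ≤ n → wordProd kamaeA y n *ᵥ (fun _ => (1 : ℝ)) ≠ 0) ∧
    ∃ V : (ℕ → Fin 2) → (Fin 3 → ℝ), (∀ y, probVec (V y)) ∧
      TendstoUniformly (fun n y => nrm (wordProd kamaeA y n *ᵥ fun _ => (1 : ℝ))) V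
        atTop := by
  refine ⟨fun y n _ => wordProd_mulVec_one_ne_zero y n, ?_⟩
  obtain ⟨V, hV⟩ := exists_tendstoUniformly_of_dist_le
    (F := fun n y => nrm (wordProd kamaeA y n *ᵥ fun _ => (1 : ℝ)))
    tendsto_two_div_two_mul_add_one fun y _ _ => dist_nrm_wordProd_mulVec_one_le y
  refine ⟨V, fun y => isClosed_setOf_probVec.mem_of_tendsto (hV.tendsto_at y) ?_, hV⟩
  exact Eventually.of_forall (probVec_nrm_wordProd_mulVec_one y)
end

section
/- Let A(0) and A(1) be the 3×3 matrices with rows (1,0,0),(0,1,0),(1,1,0) and (1,0,1),(0,1,1),(0,0,1) respectively. For y ∈ {0,1}^ℕ, the sequence of matrices (A(y_1), A(y_2), …) satisfies condition (C) for some choice of 0 ≤ λ < 1 ≤ Λ < +∞ and integers 0 = s_0 = s_1 < s_2 < … if and only if y contains infinitely many 0's and infinitely many 1's (equivalently, no shifted tail σ^n·y equals the constant sequence 000⋯ or the constant sequence 111⋯). -/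
open Matrix Filter Finset Topology

/-- The `j`-th column of a matrix, i.e. `A ⬝ U_j`. -/
def colv {d1 d2 : ℕ} (A : Matrix (Fin d1) (Fin d2) ℝ) (j : Fin d2) : Fin d1 → ℝ :=
  fun i => A i j

/-- Class `H1`: any two columns have comparable supports. -/
def memH1 {d1 d2 : ℕ} (A : Matrix (Fin d1) (Fin d2) ℝ) : Prop :=
  ∀ j0 j1 : Fin d2, (∀ i, A i j0 ≠ 0 → A i j1 ≠ 0) ∨ (∀ i, A i j1 ≠ 0 → A i j0 ≠ 0)

/-- Class `H2(Λ)`: `A i0 j0 ≠ 0` implies `‖A U_{j0}‖ ≤ Λ · A i0 j0`. -/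
def memH2 {d1 d2 : ℕ} (L : ℝ) (A : Matrix (Fin d1) (Fin d2) ℝ) : Prop :=
  ∀ i0 j0, A i0 j0 ≠ 0 → (∑ i, A i j0) ≤ L * A i0 j0

/-- Class `H3(λ)`: `A i0 j0 ≠ 0` and `A i0 j1 = 0` imply `‖A U_{j1}‖ ≤ λ · A i0 j0`. -/
def memH3 {d1 d2 : ℕ} (l : ℝ) (A : Matrix (Fin d1) (Fin d2) ℝ) : Prop :=
  ∀ i0 j0 j1, A i0 j0 ≠ 0 → A i0 j1 = 0 → (∑ i, A i j1) ≤ l * A i0 j0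

/-- `blockProd A m n = A (m+1) * A (m+2) * ⋯ * A n` (identity if `n ≤ m`). -/
noncomputable def blockProd {d : ℕ} (A : ℕ → Matrix (Fin d) (Fin d) ℝ) (m n : ℕ) :
    Matrix (Fin d) (Fin d) ℝ :=
  ((List.range (n - m)).map fun i => A (m + 1 + i)).prod

/-- Condition (C) w.r.t. `0 ≤ lam < 1 ≤ Lam` and the sequence `s` with
`0 = s 0 = s 1 < s 2 < ⋯`: for every `n ≥ s 2`, with `k = k(n)` the index such that
`s (k+1) ≤ n < s (k+2)`, the product `Q n = A (s k + 1) ⋯ A n` belongs to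
`H1 ∩ H2(Lam) ∩ H3(lam)`. -/
def condC {d : ℕ} (A : ℕ → Matrix (Fin d) (Fin d) ℝ) (lam Lam : ℝ) (s : ℕ → ℕ) : Prop :=
  s 0 = 0 ∧ s 1 = 0 ∧ (∀ k, 1 ≤ k → s k < s (k + 1)) ∧
    ∀ n k, s 2 ≤ n → s (k + 1) ≤ n → n < s (k + 2) →
      memH1 (blockProd A (s k) n) ∧ memH2 Lam (blockProd A (s k) n) ∧
        memH3 lam (blockProd A (s k) n)

/-!
A product of copies of a single `A(c)` fixes the first two coordinate vectors (`A(0)` is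
idempotent and `A(1)^k` is unipotent), so its first two columns have incomparable supports; if
`y` is eventually constant, the blocks `Q n` far out are such products and `H1` fails.

Conversely, every switch `y t = 1, y (t+1) = 0` produces `A(1) A(0) = !![2,1,0; 1,2,0; 1,1,0]`,
whose rows lie between `(1,1,0)` and twice that vector. For `U, R ≥ 0` with the row sums of `U`
at least `1`, column `j` of `U A(1) A(0) R` therefore has every entry `≥ w j := R 0 j + R 1 j`
and total mass `≤ 2 ‖U‖ w j`. A column is then either zero or has full support, which gives
`H1 ∩ H2(2 ‖U‖) ∩ H3(0)`. Cutting the sequence at the switches puts every `Q n` in this form,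
with `U` the identity or a fixed prefix.
-/

section BlockProd

variable {d : ℕ} (A : ℕ → Matrix (Fin d) (Fin d) ℝ)

lemma blockProd_mul_blockProd {m p n : ℕ} (hmp : m ≤ p) (hpn : p ≤ n) :
    blockProd A m p * blockProd A p n = blockProd A m n := by
  obtain ⟨a, rfl⟩ := Nat.exists_eq_add_of_le hmp
  obtain ⟨b, rfl⟩ := Nat.exists_eq_add_of_le hpn
  have hab : m + a + b - m = a + b := by omega
  simp only [blockProd, Nat.add_sub_cancel_left, hab, List.range_add, List.map_append,
    List.prod_append, List.map_map]
  congr 3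
  funext i
  simp only [Function.comp_apply]
  congr 1
  omega

lemma blockProd_add_two (m : ℕ) : blockProd A m (m + 2) = A (m + 1) * A (m + 2) := by
  simp [blockProd, List.range_succ, Nat.add_assoc]

lemma blockProd_eq_pow {M : Matrix (Fin d) (Fin d) ℝ} {m n : ℕ}
    (hA : ∀ l, m < l → A l = M) : blockProd A m n = M ^ (n - m) := by
  rw [blockProd, ← List.prod_replicate]
  congr 1
  rw [List.eq_replicate_iff]
  simp only [List.length_map, List.length_range, List.mem_map, List.mem_range, true_and]
  rintro _ ⟨i, -, rfl⟩
  exact hA _ (by omega)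

lemma blockProd_mem {S : Submonoid (Matrix (Fin d) (Fin d) ℝ)} (hA : ∀ l, A l ∈ S) (m n : ℕ) :
    blockProd A m n ∈ S :=
  list_prod_mem (by simp [hA])

end BlockProd

def nonnegRowSumGeOne (d : ℕ) : Submonoid (Matrix (Fin d) (Fin d) ℝ) where
  carrier := {M | (∀ i j, 0 ≤ M i j) ∧ ∀ i, 1 ≤ ∑ j, M i j}
  one_mem' := ⟨fun i j => by by_cases h : i = j <;> simp [Matrix.one_apply, h],
    fun i => by simp [Matrix.one_apply]⟩
  mul_mem' := by
    rintro M N ⟨hM, hMrow⟩ ⟨hN, hNrow⟩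
    refine ⟨fun i j => ?_, fun i => ?_⟩
    · rw [Matrix.mul_apply]
      exact Finset.sum_nonneg fun l _ => mul_nonneg (hM i l) (hN l j)
    calc (1 : ℝ) ≤ ∑ l, M i l := hMrow i
      _ ≤ ∑ l, M i l * ∑ j, N l j :=
        Finset.sum_le_sum fun l _ => le_mul_of_one_le_right (hM i l) (hNrow l)
      _ = ∑ j, (M * N) i j := by
        simp only [Matrix.mul_apply, Finset.mul_sum]
        exact Finset.sum_comm

lemma kamaeA_mem (c : Fin 2) : kamaeA c ∈ nonnegRowSumGeOne 3 := by
  refine ⟨fun i j => ?_, fun i => ?_⟩ <;> fin_cases c <;> fin_cases i <;> try fin_cases j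
  all_goals norm_num [kamaeA, Fin.sum_univ_three, Matrix.cons_val_two, Matrix.vecHead,
    Matrix.vecTail]

lemma memH_of_column_bounds {d₁ d₂ : ℕ} {Q : Matrix (Fin d₁) (Fin d₂) ℝ} {w : Fin d₂ → ℝ}
    {C : ℝ} (hw : ∀ j, 0 ≤ w j) (hC : 0 ≤ C) (hlow : ∀ i j, w j ≤ Q i j)
    (hup : ∀ j, ∑ i, Q i j ≤ C * w j) :
    memH1 Q ∧ memH2 C Q ∧ memH3 0 Q := by
  have col_zero : ∀ j, w j = 0 → ∀ i, Q i j = 0 := fun j hj i =>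
    le_antisymm
      ((Finset.single_le_sum (fun i' _ => (hw j).trans (hlow i' j)) (Finset.mem_univ i)).trans
        (by simpa [hj] using hup j))
      (hj ▸ hlow i j)
  refine ⟨fun j₀ j₁ => ?_, fun i₀ j₀ _ => ?_, fun i₀ j₀ j₁ _ hzero => ?_⟩
  · rcases (hw j₁).eq_or_lt with hj | hj
    · exact Or.inr fun i hi => absurd (col_zero j₁ hj.symm i) hi
    · exact Or.inl fun i _ => (hj.trans_le (hlow i j₁)).ne'
  · exact (hup j₀).trans (mul_le_mul_of_nonneg_left (hlow i₀ j₀) hC)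
  · have hw₁ : w j₁ = 0 := le_antisymm (hzero ▸ hlow i₀ j₁) (hw j₁)
    simpa [hw₁] using hup j₁

lemma column_bounds_mul {d : ℕ} {U X : Matrix (Fin d) (Fin d) ℝ}
    (hU : U ∈ nonnegRowSumGeOne d) {j : Fin d} {a b : ℝ} (ha : 0 ≤ a)
    (hlow : ∀ m, a ≤ X m j) (hup : ∀ m, X m j ≤ b) :
    (∀ i, a ≤ (U * X) i j) ∧ ∑ i, (U * X) i j ≤ (∑ p, ∑ q, U p q) * b := by
  obtain ⟨hU, hUrow⟩ := hU
  refine ⟨fun i => ?_, ?_⟩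
  · calc a ≤ (∑ m, U i m) * a := le_mul_of_one_le_left ha (hUrow i)
      _ = ∑ m, U i m * a := Finset.sum_mul _ _ _
      _ ≤ ∑ m, U i m * X m j :=
        Finset.sum_le_sum fun m _ => mul_le_mul_of_nonneg_left (hlow m) (hU i m)
      _ = (U * X) i j := (Matrix.mul_apply ..).symm
  · calc ∑ i, (U * X) i j ≤ ∑ p, ∑ q, U p q * b :=
          Finset.sum_le_sum fun p _ => (Matrix.mul_apply ..).trans_le <|
            Finset.sum_le_sum fun q _ => mul_le_mul_of_nonneg_left (hup q) (hU p q)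
      _ = (∑ p, ∑ q, U p q) * b := by simp only [Finset.sum_mul]

lemma kamaeA_one_mul_kamaeA_zero : kamaeA 1 * kamaeA 0 = !![2, 1, 0; 1, 2, 0; 1, 1, 0] := by
  ext i j
  fin_cases i <;> fin_cases j <;>
    norm_num [kamaeA, Matrix.mul_apply, Fin.sum_univ_three, Matrix.cons_val_two, Matrix.vecHead,
      Matrix.vecTail]

lemma column_bounds_kamaeA_one_mul_kamaeA_zero_mul {R : Matrix (Fin 3) (Fin 3) ℝ}
    (hR : ∀ i j, 0 ≤ R i j) (m j : Fin 3) :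
    R 0 j + R 1 j ≤ (kamaeA 1 * kamaeA 0 * R) m j ∧
      (kamaeA 1 * kamaeA 0 * R) m j ≤ 2 * (R 0 j + R 1 j) := by
  have := hR 0 j; have := hR 1 j
  rw [kamaeA_one_mul_kamaeA_zero]
  refine ⟨?_, ?_⟩ <;> fin_cases m <;> simp [Matrix.mul_apply, Fin.sum_univ_three] <;> linarith

lemma memH_mul_kamaeA_one_mul_kamaeA_zero_mul {U R : Matrix (Fin 3) (Fin 3) ℝ}
    (hU : U ∈ nonnegRowSumGeOne 3) (hR : ∀ i j, 0 ≤ R i j) {Λ : ℝ} (hΛ : 2 * ∑ p, ∑ q, U p q ≤ Λ) :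
    memH1 (U * (kamaeA 1 * kamaeA 0 * R)) ∧
      memH2 Λ (U * (kamaeA 1 * kamaeA 0 * R)) ∧
        memH3 0 (U * (kamaeA 1 * kamaeA 0 * R)) := by
  have hw : ∀ j, 0 ≤ R 0 j + R 1 j := fun j => add_nonneg (hR 0 j) (hR 1 j)
  have hUsum : 0 ≤ ∑ p, ∑ q, U p q :=
    Finset.sum_nonneg fun p _ => Finset.sum_nonneg fun q _ => hU.1 p q
  have hcol j := column_bounds_mul hU (hw j)
    (fun m => (column_bounds_kamaeA_one_mul_kamaeA_zero_mul hR m j).1)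
    (fun m => (column_bounds_kamaeA_one_mul_kamaeA_zero_mul hR m j).2)
  refine memH_of_column_bounds hw (by linarith) (fun i j => (hcol j).1 i) fun j => ?_
  calc _ ≤ (∑ p, ∑ q, U p q) * (2 * (R 0 j + R 1 j)) := (hcol j).2
    _ = (2 * ∑ p, ∑ q, U p q) * (R 0 j + R 1 j) := by ring
    _ ≤ Λ * (R 0 j + R 1 j) := mul_le_mul_of_nonneg_right hΛ (hw j)

lemma not_memH1_of_diagonal_block {d₁ d₂ : ℕ} {Q : Matrix (Fin d₁) (Fin d₂) ℝ}
    {i₀ i₁ : Fin d₁} {j₀ j₁ : Fin d₂} (h₀₀ : Q i₀ j₀ ≠ 0) (h₀₁ : Q i₀ j₁ = 0)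
    (h₁₁ : Q i₁ j₁ ≠ 0) (h₁₀ : Q i₁ j₀ = 0) : ¬ memH1 Q := fun hQ =>
  (hQ j₀ j₁).elim (fun h => h i₀ h₀₀ h₀₁) (fun h => h i₁ h₁₁ h₁₀)

lemma kamaeA_zero_pow {k : ℕ} (hk : k ≠ 0) : kamaeA 0 ^ k = kamaeA 0 := by
  obtain ⟨k, rfl⟩ := Nat.exists_eq_succ_of_ne_zero hk
  refine IsIdempotentElem.pow_succ_eq k ?_
  ext i j
  fin_cases i <;> fin_cases j <;>
    norm_num [IsIdempotentElem, kamaeA, Matrix.mul_apply, Fin.sum_univ_three, Matrix.cons_val_two,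
      Matrix.vecHead, Matrix.vecTail]

lemma kamaeA_one_pow (k : ℕ) : kamaeA 1 ^ k = !![1, 0, (k : ℝ); 0, 1, k; 0, 0, 1] := by
  induction k with
  | zero => simp [Matrix.one_fin_three]
  | succ k ih =>
    rw [pow_succ, ih]
    ext i j
    fin_cases i <;> fin_cases j <;>
      norm_num [kamaeA, Matrix.mul_apply, Fin.sum_univ_three, Matrix.cons_val_two, Matrix.vecHead,
        Matrix.vecTail, add_comm]

lemma not_memH1_kamaeA_pow (c : Fin 2) (k : ℕ) : ¬ memH1 (kamaeA c ^ k) := by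
  have of_block : ∀ M : Matrix (Fin 3) (Fin 3) ℝ,
      M 0 0 = 1 → M 0 1 = 0 → M 1 1 = 1 → M 1 0 = 0 → ¬ memH1 M :=
    fun M h₀₀ h₀₁ h₁₁ h₁₀ => not_memH1_of_diagonal_block (by simp [h₀₀]) h₀₁ (by simp [h₁₁]) h₁₀
  obtain rfl | rfl : c = 0 ∨ c = 1 := by omega
  · rcases eq_or_ne k 0 with rfl | hk
    · apply of_block <;> simp
    · rw [kamaeA_zero_pow hk]
      apply of_block <;> simp [kamaeA]
  · rw [kamaeA_one_pow]
    apply of_block <;> simp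

lemma condC.exists_memH1_blockProd {d : ℕ} {A : ℕ → Matrix (Fin d) (Fin d) ℝ} {lam Lam : ℝ}
    {s : ℕ → ℕ} (h : condC A lam Lam s) (N : ℕ) :
    ∃ m n, N ≤ m ∧ memH1 (blockProd A m n) := by
  obtain ⟨-, -, hmono, hQ⟩ := h
  have hs : StrictMono fun k => s (k + 1) :=
    strictMono_nat_of_lt_succ fun k => hmono (k + 1) (Nat.le_add_left 1 k)
  exact ⟨s (N + 1), s (N + 2), hs.id_le N,
    (hQ _ (N + 1) (hs.monotone (Nat.le_add_left 1 N)) le_rfl (hs (Nat.lt_succ_self _))).1⟩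

lemma not_condC_kamaeA_of_eventually_const {y : ℕ → Fin 2} {c : Fin 2} {N : ℕ}
    (hy : ∀ n, N ≤ n → y n = c) (lam Lam : ℝ) (s : ℕ → ℕ) :
    ¬ condC (fun n => kamaeA (y (n - 1))) lam Lam s := fun h => by
  obtain ⟨m, n, hNm, hQ⟩ := h.exists_memH1_blockProd N
  rw [blockProd_eq_pow _ fun l hl => by rw [hy (l - 1) (by omega)]] at hQ
  exact not_memH1_kamaeA_pow c _ hQ

lemma frequently_and_not_succ {p : ℕ → Prop} (h₁ : ∃ᶠ n in atTop, p n)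
    (h₀ : ∃ᶠ n in atTop, ¬ p n) : ∃ᶠ n in atTop, p n ∧ ¬ p (n + 1) := by
  rw [frequently_atTop] at *
  intro N
  obtain ⟨a, hNa, ha⟩ := h₁ N
  obtain ⟨b, hab, hb⟩ := h₀ a
  by_contra! hstay
  exact hb (Nat.le_induction ha (fun n han hn => hstay n (hNa.trans han) hn) b hab)

lemma exists_seq_and_not_succ {p : ℕ → Prop} (h₁ : ∃ᶠ n in atTop, p n)
    (h₀ : ∃ᶠ n in atTop, ¬ p n) :
    ∃ t : ℕ → ℕ, (∀ k, t k + 2 ≤ t (k + 1)) ∧ ∀ k, p (t k) ∧ ¬ p (t k + 1) := by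
  obtain ⟨t, ht, hp⟩ := extraction_of_frequently_atTop (frequently_and_not_succ h₁ h₀)
  refine ⟨t, fun k => ?_, hp⟩
  have hlt := ht k.lt_add_one
  have hne : t (k + 1) ≠ t k + 1 := fun h => (hp k).2 (h ▸ (hp (k + 1)).1)
  omega

/-- The cuts are `s = 0, 0, t 1, t 2, …`: skipping `t 0` makes the first block `Q n`, `n ≥ t 1`,
also contain the product at `t 0`, behind the fixed prefix `A 1 ⋯ A (t 0)`. -/
lemma condC_of_kamaeA_one_mul_kamaeA_zero {A : ℕ → Matrix (Fin 3) (Fin 3) ℝ}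
    (hA : ∀ l, A l ∈ nonnegRowSumGeOne 3) {t : ℕ → ℕ} (ht : ∀ k, t k + 2 ≤ t (k + 1))
    (hP : ∀ k, A (t k + 1) * A (t k + 2) = kamaeA 1 * kamaeA 0) :
    condC A 0 (2 * max (∑ p, ∑ q, blockProd A 0 (t 0) p q) 3)
      (fun k => if k < 2 then 0 else t (k - 1)) := by
  set s : ℕ → ℕ := fun k => if k < 2 then 0 else t (k - 1)
  have hs_add_two (j : ℕ) : s (j + 1 + 1) = t (j + 1) := by simp [s]
  have hs_add_one_le (j : ℕ) : s (j + 1) ≤ t j := by rcases j with _ | j <;> simp [s]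
  refine ⟨rfl, rfl, fun k hk => ?_, fun n k hn hlo hhi => ?_⟩
  · obtain ⟨j, rfl⟩ := Nat.exists_eq_add_of_le' hk
    rw [hs_add_two]
    exact (hs_add_one_le j).trans_lt (by have := ht j; omega)
  · obtain ⟨j, rfl⟩ : ∃ j, k = j + 1 :=
      Nat.exists_eq_add_one.mpr <| Nat.pos_of_ne_zero fun hk => by
        subst hk
        exact lt_irrefl _ (hn.trans_lt hhi)
    have htj : t j + 2 ≤ n := (ht j).trans ((hs_add_two j).symm.trans_le hlo)
    have hU : 2 * ∑ p, ∑ q, blockProd A (s (j + 1)) (t j) p q ≤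
        2 * max (∑ p, ∑ q, blockProd A 0 (t 0) p q) 3 := by
      rcases j with _ | j
      · simp [s]
      · simp [hs_add_two, blockProd, Matrix.one_apply, Fin.sum_univ_three]
    rw [← blockProd_mul_blockProd A (hs_add_one_le j) (by omega : t j ≤ n),
      ← blockProd_mul_blockProd A (Nat.le_add_right (t j) 2) htj, blockProd_add_two, hP]
    exact memH_mul_kamaeA_one_mul_kamaeA_zero_mul (blockProd_mem A hA _ _)
      (blockProd_mem A hA _ _).1 hU

/-- **Proposition 7.2.** The sequence `(A(y_1), A(y_2), …)` satisfies condition (C)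
(for some `0 ≤ λ < 1 ≤ Λ` and some sequence `(s_k)`) if and only if `y` contains
infinitely many `0`'s and infinitely many `1`'s. -/
theorem kamae_condC_iff (y : ℕ → Fin 2) :
    (∃ (lam Lam : ℝ) (s : ℕ → ℕ), 0 ≤ lam ∧ lam < 1 ∧ 1 ≤ Lam ∧
      condC (fun n => kamaeA (y (n - 1))) lam Lam s) ↔
    ((∀ N : ℕ, ∃ n, N ≤ n ∧ y n = 0) ∧ (∀ N : ℕ, ∃ n, N ≤ n ∧ y n = 1)) := by
  constructor
  · rintro ⟨lam, Lam, s, -, -, -, hC⟩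
    have not_eventually_const (c : Fin 2) (N : ℕ) : ∃ n, N ≤ n ∧ y n ≠ c := by
      by_contra! hy
      exact not_condC_kamaeA_of_eventually_const hy lam Lam s hC
    refine ⟨fun N => ?_, fun N => ?_⟩
    · obtain ⟨n, hNn, hn⟩ := not_eventually_const 1 N
      exact ⟨n, hNn, by omega⟩
    · obtain ⟨n, hNn, hn⟩ := not_eventually_const 0 N
      exact ⟨n, hNn, by omega⟩
  · rintro ⟨h₀, h₁⟩
    obtain ⟨t, ht, hswitch⟩ := exists_seq_and_not_succ (p := fun n => y n = 1)
      (frequently_atTop.2 h₁) ((frequently_atTop.2 h₀).mono fun n hn => by simp [hn])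
    refine ⟨0, _, _, le_rfl, one_pos, ?_,
      condC_of_kamaeA_one_mul_kamaeA_zero (fun l => kamaeA_mem _) ht fun k => ?_⟩
    · linarith [le_max_right (∑ p, ∑ q, blockProd (fun n => kamaeA (y (n - 1))) 0 (t 0) p q) 3]
    · obtain ⟨hy₁, hy₀⟩ := hswitch k
      rw [Nat.add_sub_cancel, show t k + 2 - 1 = t k + 1 by omega, hy₁,
        show y (t k + 1) = 0 by omega]
end

section
/- Let β > 1 be the unique real root of β³ = 2β² − β + 1 (β ≈ 1.755). Then a sequence ε = ε_1ε_2⋯ ∈ {0,1}^ℕ belongs to the β-shift Ω_β if and only if for every k ≥ 1: ε_k = 1 and ε_{k+1} = 1 imply ε_{k+2} = 0 and ε_{k+3} = 0. -/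
/-!
Write `q = β⁻¹`; the equation for `β` is equivalent to `q + q² + q⁴ = 1`.

If `ε` is the Parry expansion of `x ∈ [0,1)`, then `s_{k+n} ≤ x < s_k + β⁻ᵏ`, so every partial
sum of every shift of `ε` is `< 1`. A factor `11` followed by `1` or by `01` would give a partial
sum `q + q² + q³ > 1` or `q + q² + q⁴ = 1`; hence `11` is always followed by `00`, and this closed
condition passes to the closure `Ω_β`.

Conversely, if every `11` is followed by `00`, each sequence starts with a block `0`, `10` or
`1100`, worth at most `q`, `q + q²` or `q + q² + q⁴` before the rest is rescaled, so by induction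
all partial sums of all shifts are `< 1`. Then the truncation `ε₁ ⋯ εₙ 0^∞` is the Parry expansion
of `s_n ∈ [0,1)`, and these truncations converge to `ε`.
-/

open Filter Finset Topology

/-- `s_n = Σ_{k=1}^n ε_k / β^k`, the partial sums associated with a binary sequence. -/
noncomputable def parrySum (β : ℝ) (ε : ℕ → Fin 2) (n : ℕ) : ℝ :=
  ∑ k ∈ Finset.range n, (ε k : ℝ) / β ^ (k + 1)

/-- `ε` is the Parry expansion of `x` in base `β`: for every `n ≥ 1`,
`s_n ≤ x < s_n + β^{-n}`. -/
def IsParryExpansion (β : ℝ) (x : ℝ) (ε : ℕ → Fin 2) : Prop :=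
  ∀ n, 1 ≤ n → parrySum β ε n ≤ x ∧ x < parrySum β ε n + (β ^ n)⁻¹

/-- The β-shift `Ω_β`: the closure in `{0,1}^ℕ` of the set of Parry expansions of the
real numbers in `[0,1)`. -/
def betaShift (β : ℝ) : Set (ℕ → Fin 2) :=
  closure {ε | ∃ x, 0 ≤ x ∧ x < 1 ∧ IsParryExpansion β x ε}

section parrySum

variable {β : ℝ}

@[simp]
lemma parrySum_zero (ε : ℕ → Fin 2) : parrySum β ε 0 = 0 := by
  simp [parrySum]

lemma parrySum_succ' (ε : ℕ → Fin 2) (n : ℕ) :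
    parrySum β ε (n + 1) = β⁻¹ * (ε 0 + parrySum β (fun i => ε (i + 1)) n) := by
  simp only [parrySum, Finset.sum_range_succ', mul_add, Finset.mul_sum]
  rw [add_comm]
  congr 1
  · simp only [zero_add, pow_one, div_eq_mul_inv, mul_comm]
  · refine Finset.sum_congr rfl fun k _ => ?_
    simp only [pow_succ' β (k + 1), div_eq_mul_inv, mul_inv]
    ring

lemma parrySum_add (ε : ℕ → Fin 2) (m n : ℕ) :
    parrySum β ε (m + n) = parrySum β ε m + parrySum β (fun i => ε (m + i)) n / β ^ m := by
  simp only [parrySum, Finset.sum_range_add, Finset.sum_div]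
  congr 1
  refine Finset.sum_congr rfl fun k _ => ?_
  rw [div_div, ← pow_add, add_assoc, add_comm (k + 1)]

lemma parrySum_nonneg (hβ : 0 ≤ β) (ε : ℕ → Fin 2) (n : ℕ) : 0 ≤ parrySum β ε n :=
  Finset.sum_nonneg fun _ _ => by positivity

lemma parrySum_mono (hβ : 0 ≤ β) (ε : ℕ → Fin 2) : Monotone (parrySum β ε) :=
  fun _ _ hmn => Finset.sum_le_sum_of_subset_of_nonneg (Finset.range_subset_range.2 hmn)
    fun _ _ _ => by positivity

lemma parrySum_truncate (ε : ℕ → Fin 2) (n m : ℕ) :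
    parrySum β (fun k => if k < n then ε k else 0) m = parrySum β ε (min m n) := by
  have below : ∀ m ≤ n, parrySum β (fun k => if k < n then ε k else 0) m = parrySum β ε m :=
    fun m hmn => Finset.sum_congr rfl fun k hk => by
      simp only [if_pos ((Finset.mem_range.1 hk).trans_le hmn)]
  rcases le_total m n with hmn | hnm
  · rw [min_eq_left hmn, below m hmn]
  · obtain ⟨d, rfl⟩ := Nat.exists_eq_add_of_le hnm
    rw [min_eq_right hnm, parrySum_add, below n le_rfl]
    simp [parrySum]

end parrySum

lemma inv_add_inv_sq_add_inv_pow_four_eq_one {β : ℝ} (hβ : β ≠ 0)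
    (heq : β ^ 3 = 2 * β ^ 2 - β + 1) : β⁻¹ + β⁻¹ ^ 2 + β⁻¹ ^ 4 = 1 := by
  field_simp
  linear_combination (-(β + 1)) * heq

def ElevenForcesZeroZero (ε : ℕ → Fin 2) : Prop :=
  ∀ k : ℕ, ε k = 1 ∧ ε (k + 1) = 1 → ε (k + 2) = 0 ∧ ε (k + 3) = 0

def ShiftPartialSumsLtOne (β : ℝ) (ε : ℕ → Fin 2) : Prop :=
  ∀ k n, parrySum β (fun i => ε (k + i)) n < 1

lemma isClosed_setOf_elevenForcesZeroZero :
    IsClosed {ε : ℕ → Fin 2 | ElevenForcesZeroZero ε} := by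
  have coord (i : ℕ) (a : Fin 2) : IsClopen {ε : ℕ → Fin 2 | ε i = a} :=
    (isClopen_discrete {a}).preimage (continuous_apply i)
  simp only [ElevenForcesZeroZero, Set.ofPred_forall]
  exact isClosed_iInter fun k => isClosed_imp ((coord k 1).isOpen.inter (coord (k + 1) 1).isOpen)
    ((coord (k + 2) 0).isClosed.inter (coord (k + 3) 0).isClosed)

lemma tendsto_truncate {α : Type*} [TopologicalSpace α] [Zero α] (ε : ℕ → α) :
    Tendsto (fun n k => if k < n then ε k else 0) atTop (𝓝 ε) :=
  tendsto_pi_nhds.2 fun k => tendsto_const_nhds.congr' <|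
    (eventually_gt_atTop k).mono fun _ hn => (if_pos hn).symm

section Admissibility

variable {β x : ℝ} {ε : ℕ → Fin 2}

namespace ElevenForcesZeroZero

lemma tail (h : ElevenForcesZeroZero ε) : ElevenForcesZeroZero (fun i => ε (i + 1)) :=
  fun k => h (k + 1)

lemma shift (h : ElevenForcesZeroZero ε) (k : ℕ) : ElevenForcesZeroZero (fun i => ε (k + i)) :=
  fun j => by simpa only [add_assoc] using h (k + j)

theorem parrySum_lt_one (hβ : 0 < β) (hq : β⁻¹ + β⁻¹ ^ 2 + β⁻¹ ^ 4 ≤ 1)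
    (h : ElevenForcesZeroZero ε) (n : ℕ) : parrySum β ε n < 1 := by
  induction n using Nat.strong_induction_on generalizing ε with
  | _ n ih =>
  have hq0 : 0 < β⁻¹ := inv_pos.2 hβ
  rcases n with _ | m
  · simp
  rw [parrySum_succ']
  obtain h0 | h0 : ε 0 = 0 ∨ ε 0 = 1 := by omega
  · have := ih m (by omega) h.tail
    simp only [h0, Fin.val_zero, Nat.cast_zero, zero_add]
    nlinarith
  rcases m with _ | m
  · simp only [h0, Fin.val_one, Nat.cast_one, parrySum_zero, add_zero, mul_one]
    nlinarith
  rw [parrySum_succ']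
  obtain h1 | h1 : ε 1 = 0 ∨ ε 1 = 1 := by omega
  · have := ih m (by omega) h.tail.tail
    simp only [h0, h1, Fin.val_zero, Fin.val_one, Nat.cast_zero, Nat.cast_one, zero_add]
    nlinarith [mul_lt_mul_of_pos_left (mul_lt_of_lt_one_right hq0 this) hq0, pow_pos hq0 4]
  obtain ⟨h2, h3⟩ := h 0 ⟨h0, h1⟩
  have tail_small : parrySum β (fun i => ε (i + 1 + 1)) m < β⁻¹ ^ 2 :=
    calc parrySum β (fun i => ε (i + 1 + 1)) m
        ≤ parrySum β (fun i => ε (i + 1 + 1)) (m + 2) := parrySum_mono hβ.le _ (by omega)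
      _ = β⁻¹ ^ 2 * parrySum β (fun i => ε (i + 1 + 1 + 1 + 1)) m := by
        simp only [parrySum_succ', h2, h3, Fin.val_zero, Nat.cast_zero, zero_add]
        ring
      _ < β⁻¹ ^ 2 * 1 := by gcongr; exact ih m (by omega) h.tail.tail.tail.tail
      _ = β⁻¹ ^ 2 := mul_one _
  simp only [h0, h1, Fin.val_one, Nat.cast_one]
  nlinarith [mul_lt_mul_of_pos_left tail_small (pow_pos hq0 2)]

theorem shiftPartialSumsLtOne (hβ : 0 < β) (hq : β⁻¹ + β⁻¹ ^ 2 + β⁻¹ ^ 4 ≤ 1)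
    (h : ElevenForcesZeroZero ε) : ShiftPartialSumsLtOne β ε :=
  fun k => (h.shift k).parrySum_lt_one hβ hq

end ElevenForcesZeroZero

namespace ShiftPartialSumsLtOne

theorem elevenForcesZeroZero (hβ : 1 < β) (hq : 1 ≤ β⁻¹ + β⁻¹ ^ 2 + β⁻¹ ^ 4)
    (h : ShiftPartialSumsLtOne β ε) : ElevenForcesZeroZero ε := by
  intro k ⟨h0, h1⟩
  have hq0 : 0 < β⁻¹ := by positivity
  have hq43 : β⁻¹ ^ 4 < β⁻¹ ^ 3 :=
    pow_lt_pow_right_of_lt_one₀ hq0 (inv_lt_one_of_one_lt₀ hβ) (by norm_num)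
  have sum3 := h k 3
  have sum4 := h k 4
  simp only [parrySum_succ', parrySum_zero, add_zero, h0, h1, Fin.val_one, Nat.cast_one,
    zero_add] at sum3 sum4
  have h2 : ε (k + 2) = 0 := by
    obtain h2 | h2 : ε (k + 2) = 0 ∨ ε (k + 2) = 1 := by omega
    · exact h2
    · simp only [h2, Fin.val_one, Nat.cast_one] at sum3
      nlinarith
  refine ⟨h2, ?_⟩
  obtain h3 | h3 : ε (k + 3) = 0 ∨ ε (k + 3) = 1 := by omega
  · exact h3
  · simp only [h2, h3, Fin.val_zero, Fin.val_one, Nat.cast_zero, Nat.cast_one] at sum4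
    nlinarith

theorem isParryExpansion_truncate (hβ : 0 < β) (h : ShiftPartialSumsLtOne β ε) (n : ℕ) :
    IsParryExpansion β (parrySum β ε n) (fun k => if k < n then ε k else 0) := by
  intro m _
  rw [parrySum_truncate]
  rcases le_total m n with hmn | hnm
  · obtain ⟨d, rfl⟩ := Nat.exists_eq_add_of_le hmn
    rw [min_eq_left hmn, parrySum_add, div_eq_mul_inv]
    exact ⟨le_add_of_nonneg_right (mul_nonneg (parrySum_nonneg hβ.le _ d) (by positivity)),
      (add_lt_add_iff_left _).2 (mul_lt_of_lt_one_left (by positivity) (h m d))⟩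
  · rw [min_eq_right hnm]
    exact ⟨le_rfl, lt_add_of_pos_right _ (by positivity)⟩

theorem mem_betaShift (hβ : 0 < β) (h : ShiftPartialSumsLtOne β ε) : ε ∈ betaShift β :=
  mem_closure_of_tendsto (tendsto_truncate ε) <| Eventually.of_forall fun n =>
    ⟨parrySum β ε n, parrySum_nonneg hβ.le ε n, by simpa using h 0 n,
      h.isParryExpansion_truncate hβ n⟩

end ShiftPartialSumsLtOne

theorem IsParryExpansion.shiftPartialSumsLtOne (hβ : 0 < β) (hx : x < 1)
    (hε : IsParryExpansion β x ε) : ShiftPartialSumsLtOne β ε := by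
  intro k n
  rcases n.eq_zero_or_pos with rfl | hn
  · simp
  have upper : x < parrySum β ε k + (β ^ k)⁻¹ := by
    rcases k.eq_zero_or_pos with rfl | hk
    · simpa using hx
    · exact (hε k hk).2
  have lower := (hε (k + n) (by omega)).1
  rw [parrySum_add, div_eq_mul_inv] at lower
  exact lt_of_mul_lt_mul_right (by linarith : _ < 1 * (β ^ k)⁻¹) (by positivity)

end Admissibility

/-- **Lemma 8.1.** For the Pisot number `β ≈ 1.755` with `β³ = 2β² − β + 1`, the β-shift
is the subshift of finite type of the binary sequences in which every factor `11` is
followed by `00`. -/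
theorem betaShift_finiteType (β : ℝ) (hβ : 1 < β)
    (heq : β ^ 3 = 2 * β ^ 2 - β + 1) (ε : ℕ → Fin 2) :
    ε ∈ betaShift β ↔
      ∀ k : ℕ, ε k = 1 ∧ ε (k + 1) = 1 → ε (k + 2) = 0 ∧ ε (k + 3) = 0 := by
  have hβ0 : 0 < β := by linarith
  have hq := inv_add_inv_sq_add_inv_pow_four_eq_one hβ0.ne' heq
  constructor
  · refine fun hmem => closure_minimal ?_ isClosed_setOf_elevenForcesZeroZero hmem
    rintro ε' ⟨x, -, hx, hε'⟩
    exact (hε'.shiftPartialSumsLtOne hβ0 hx).elevenForcesZeroZero hβ hq.ge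
  · exact fun h => (ElevenForcesZeroZero.shiftPartialSumsLtOne hβ0 hq.le h).mem_betaShift hβ0
end
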